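/- Data processing for smooth max-entropy (Lemma 4, second inequality): For any normalized state ρ on A⊗B⊗C (finite-dimensional systems) and any ε ≥ 0, H_max^ε(A|BC)_ρ ≤ H_max^ε(A|B)_ρ, where the right-hand side is evaluated on tr_C ρ. -/

import Mathlib

open scoped Kronecker ComplexOrder Classical
open Matrix

noncomputable section
namespace Paper

/-- A subnormalized state: positive semidefinite with trace at most one. -/
def IsSubState {A : Type*} [Fintype A] (ρ : Matrix A A ℂ) : Prop :=
  ρ.PosSemidef ∧ ρ.trace.re ≤ 1

/-- A normalized state: positive semidefinite with trace one. -/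
def IsState {A : Type*} [Fintype A] (ρ : Matrix A A ℂ) : Prop :=
  ρ.PosSemidef ∧ ρ.trace = 1

/-- The Löwner order: `ρ ≤ σ` iff `σ - ρ` is positive semidefinite. -/
def LoewnerLE {A : Type*} [Fintype A] (ρ σ : Matrix A A ℂ) : Prop :=
  (σ - ρ).PosSemidef

/-- Square root of a positive semidefinite matrix (junk value `0` otherwise). -/
def matSqrt {A : Type*} [Fintype A] [DecidableEq A] (M : Matrix A A ℂ) : Matrix A A ℂ :=
  if h : M.PosSemidef then
    (h.1.eigenvectorUnitary : Matrix A A ℂ) *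
      Matrix.diagonal (fun i => ((Real.sqrt (h.1.eigenvalues i) : ℝ) : ℂ)) *
      (star h.1.eigenvectorUnitary : Matrix A A ℂ)
  else 0

/-- Fidelity `F(ρ,σ) = tr √(√ρ σ √ρ)`. -/
def fid {A : Type*} [Fintype A] [DecidableEq A] (ρ σ : Matrix A A ℂ) : ℝ :=
  ((matSqrt (matSqrt ρ * σ * matSqrt ρ)).trace).re

/-- Generalized fidelity of subnormalized states. -/
def genFid {A : Type*} [Fintype A] [DecidableEq A] (ρ σ : Matrix A A ℂ) : ℝ :=
  fid ρ σ + Real.sqrt ((1 - ρ.trace.re) * (1 - σ.trace.re))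

/-- Purified distance `P(ρ,σ) = √(1 - F̄(ρ,σ)²)`. -/
def pDist {A : Type*} [Fintype A] [DecidableEq A] (ρ σ : Matrix A A ℂ) : ℝ :=
  Real.sqrt (1 - (genFid ρ σ)^2)

/-- Conditional min-entropy `H_min(A|B)_ρ` for a bipartite (sub)state on `A ⊗ B`. -/
def Hmin {A B : Type*} [Fintype A] [DecidableEq A] [Fintype B] [DecidableEq B]
    (ρ : Matrix (A × B) (A × B) ℂ) : ℝ :=
  sSup {l : ℝ | ∃ σ : Matrix B B ℂ, IsState σ ∧
    LoewnerLE ρ (((2:ℝ) ^ (-l)) • ((1 : Matrix A A ℂ) ⊗ₖ σ))}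

/-- Conditional max-entropy `H_max(A|B)_ρ = 2 log₂ sup_σ F(ρ, 1⊗σ)`. -/
def Hmax {A B : Type*} [Fintype A] [DecidableEq A] [Fintype B] [DecidableEq B]
    (ρ : Matrix (A × B) (A × B) ℂ) : ℝ :=
  2 * Real.logb 2
    (sSup {f : ℝ | ∃ σ : Matrix B B ℂ, IsState σ ∧ f = fid ρ ((1 : Matrix A A ℂ) ⊗ₖ σ)})

/-- Smooth conditional min-entropy. -/
def sHmin {A B : Type*} [Fintype A] [DecidableEq A] [Fintype B] [DecidableEq B]
    (ε : ℝ) (ρ : Matrix (A × B) (A × B) ℂ) : ℝ :=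
  sSup {h : ℝ | ∃ ρ' : Matrix (A × B) (A × B) ℂ,
    IsSubState ρ' ∧ pDist ρ' ρ ≤ ε ∧ h = Hmin ρ'}

/-- Smooth conditional max-entropy. -/
def sHmax {A B : Type*} [Fintype A] [DecidableEq A] [Fintype B] [DecidableEq B]
    (ε : ℝ) (ρ : Matrix (A × B) (A × B) ℂ) : ℝ :=
  sInf {h : ℝ | ∃ ρ' : Matrix (A × B) (A × B) ℂ,
    IsSubState ρ' ∧ pDist ρ' ρ ≤ ε ∧ h = Hmax ρ'}

/-- Partial trace over the second tensor factor. -/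
def ptraceSnd {A B : Type*} [Fintype B] (ρ : Matrix (A × B) (A × B) ℂ) : Matrix A A ℂ :=
  Matrix.of fun a a' => ∑ b, ρ (a, b) (a', b)

/-- Partial trace over the first tensor factor. -/
def ptraceFst {A B : Type*} [Fintype A] (ρ : Matrix (A × B) (A × B) ℂ) : Matrix B B ℂ :=
  Matrix.of fun b b' => ∑ a, ρ (a, b) (a, b')

/-- Von Neumann entropy (base-2), via eigenvalues of a Hermitian matrix. -/
def vN {A : Type*} [Fintype A] [DecidableEq A] (ρ : Matrix A A ℂ) : ℝ :=
  if h : ρ.IsHermitian then -∑ i, (h.eigenvalues i) * Real.logb 2 (h.eigenvalues i) else 0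

/-- Conditional von Neumann entropy `S(A|B)_ρ = S(ρ) - S(ρ^B)`. -/
def condEnt {A B : Type*} [Fintype A] [DecidableEq A] [Fintype B] [DecidableEq B]
    (ρ : Matrix (A × B) (A × B) ℂ) : ℝ :=
  vN ρ - vN (ptraceFst ρ)

/-- The n-fold tensor power of a bipartite state, as a state on `A^n ⊗ B^n`. -/
def powState {A B : Type*} (ρ : Matrix (A × B) (A × B) ℂ) (n : ℕ) :
    Matrix ((Fin n → A) × (Fin n → B)) ((Fin n → A) × (Fin n → B)) ℂ :=
  Matrix.of fun p q => ∏ i, ρ (p.1 i, p.2 i) (q.1 i, q.2 i)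



section Wiretap

variable {𝓧 B E F : Type*} [Fintype 𝓧] [DecidableEq 𝓧]
  [Fintype B] [DecidableEq B] [Fintype E] [DecidableEq E] [Fintype F] [DecidableEq F]

/-- The i.i.d. output state `ρ_{x^n}^{B^n E^n}` on `B^n ⊗ E^n` for input word `xs`. -/
def rhoWord (W : 𝓧 → Matrix (B × E) (B × E) ℂ) {n : ℕ} (xs : Fin n → 𝓧) :
    Matrix ((Fin n → B) × (Fin n → E)) ((Fin n → B) × (Fin n → E)) ℂ :=
  Matrix.of fun p q => ∏ i, W (xs i) (p.1 i, p.2 i) (q.1 i, q.2 i)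

/-- `tr_B [ρ (D ⊗ 1)]` for a bipartite operator `ρ` on `B⊗E` and `D` on `B`. -/
def condOut {BB EE : Type*} [Fintype BB] [Fintype EE]
    (ρ : Matrix (BB × EE) (BB × EE) ℂ) (D : Matrix BB BB ℂ) : Matrix EE EE ℂ :=
  Matrix.of fun e e' => ∑ b, ∑ b', ρ (b, e) (b', e') * D b' b

/-- The reduced state `ρ^{UÛ}` of the code. -/
def rhoUU (W : 𝓧 → Matrix (B × E) (B × E) ℂ) (n M : ℕ)
    (Enc : Fin M → (Fin n → 𝓧) → ℝ)
    (D : Fin M → Matrix (Fin n → B) (Fin n → B) ℂ) :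
    Matrix (Fin M × Fin M) (Fin M × Fin M) ℂ :=
  Matrix.of fun p q => if p = q then
    (M : ℂ)⁻¹ * ∑ xs, (Enc p.1 xs : ℂ) * (condOut (rhoWord W xs) (D p.2)).trace
  else 0

/-- The reduced state `ρ^{U E^n}` of the code. -/
def rhoUE (W : 𝓧 → Matrix (B × E) (B × E) ℂ) (n M : ℕ)
    (Enc : Fin M → (Fin n → 𝓧) → ℝ) :
    Matrix (Fin M × (Fin n → E)) (Fin M × (Fin n → E)) ℂ :=
  Matrix.of fun p q => if p.1 = q.1 then
    (M : ℂ)⁻¹ * ∑ xs, (Enc p.1 xs : ℂ) * (ptraceFst (rhoWord W xs)) p.2 q.2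
  else 0

/-- The maximally correlated state `Δ^{UÛ} = (1/M) ∑_u |u⟩⟨u| ⊗ |u⟩⟨u|`. -/
def DeltaUU (M : ℕ) : Matrix (Fin M × Fin M) (Fin M × Fin M) ℂ :=
  Matrix.of fun p q => if p = q ∧ p.1 = p.2 then (M : ℂ)⁻¹ else 0

/-- `Δ^U ⊗ σ`, with `Δ^U` the maximally mixed state on `Fin M`. -/
def DeltaTensor {EE : Type*} (M : ℕ) (σ : Matrix EE EE ℂ) :
    Matrix (Fin M × EE) (Fin M × EE) ℂ :=
  Matrix.of fun p q => if p.1 = q.1 then (M : ℂ)⁻¹ * σ p.2 q.2 else 0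

/-- An `n`-block wiretap code with `M` messages, transmission error `ε`, privacy error `δ`. -/
def IsCode (W : 𝓧 → Matrix (B × E) (B × E) ℂ) (n M : ℕ) (ε δ : ℝ)
    (Enc : Fin M → (Fin n → 𝓧) → ℝ)
    (D : Fin M → Matrix (Fin n → B) (Fin n → B) ℂ) : Prop :=
  (∀ u, (∀ xs, 0 ≤ Enc u xs) ∧ (∑ xs, Enc u xs) = 1) ∧
  (∀ u, (D u).PosSemidef) ∧ (∑ u, D u) = 1 ∧
  pDist (rhoUU W n M Enc D) (DeltaUU M) ≤ ε ∧
  (∃ σ : Matrix (Fin n → E) (Fin n → E) ℂ, IsState σ ∧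
    pDist (rhoUE W n M Enc) (DeltaTensor M σ) ≤ δ)

/-- `M(n,ε,δ)`: the largest number of messages of an `n`-block code with errors `ε, δ`. -/
def Mmax (W : 𝓧 → Matrix (B × E) (B × E) ℂ) (n : ℕ) (ε δ : ℝ) : ℕ :=
  sSup {M : ℕ | ∃ (Enc : Fin M → (Fin n → 𝓧) → ℝ)
    (D : Fin M → Matrix (Fin n → B) (Fin n → B) ℂ), IsCode W n M ε δ Enc D}

/-- Conditional mutual information `I(X:F|E')` of a state on `X ⊗ ((E'⊗F) ⊗ E)`
(the trailing system `E` is traced out). -/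
def cmi3 {X E F E2 : Type*} [Fintype X] [DecidableEq X] [Fintype E] [DecidableEq E]
    [Fintype F] [DecidableEq F] [Fintype E2]
    (σ : Matrix (X × (E × F) × E2) (X × (E × F) × E2) ℂ) : ℝ :=
  vN (Matrix.of fun (p q : X × E) => ∑ f, ∑ e2, σ (p.1, (p.2, f), e2) (q.1, (q.2, f), e2))
  + vN (Matrix.of fun (p q : E × F) => ∑ x, ∑ e2, σ (x, p, e2) (x, q, e2))
  - vN (Matrix.of fun (e e' : E) => ∑ x, ∑ f, ∑ e2, σ (x, (e, f), e2) (x, (e', f), e2))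
  - vN (Matrix.of fun (p q : X × E × F) => ∑ e2, σ (p.1, p.2, e2) (q.1, q.2, e2))

/-- The state `ρ^{X E' F E} = ∑_x P(x) |x⟩⟨x| ⊗ (V⊗1) ρ_x^{BE} (V⊗1)†`. -/
def rhoXEFE (W : 𝓧 → Matrix (B × E) (B × E) ℂ) (V : Matrix (E × F) B ℂ) (P : 𝓧 → ℝ) :
    Matrix (𝓧 × (E × F) × E) (𝓧 × (E × F) × E) ℂ :=
  Matrix.of fun p q => if p.1 = q.1 then
    (P p.1 : ℂ) *
      ((V ⊗ₖ (1 : Matrix E E ℂ)) * W p.1 * (V ⊗ₖ (1 : Matrix E E ℂ))ᴴ) p.2 q.2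
  else 0

/-- `P*(W) = max_{P_X} I(X:F|E')`. -/
def Pstar (W : 𝓧 → Matrix (B × E) (B × E) ℂ) (V : Matrix (E × F) B ℂ) : ℝ :=
  sSup {r : ℝ | ∃ P : 𝓧 → ℝ, (∀ x, 0 ≤ P x) ∧ (∑ x, P x) = 1 ∧ r = cmi3 (rhoXEFE W V P)}

/-- Degradedness of the wiretap channel `W`, witnessed by a Stinespring
isometry `V : B → E' ⊗ F` of the degrading map. -/
def DegradedVia (W : 𝓧 → Matrix (B × E) (B × E) ℂ) (V : Matrix (E × F) B ℂ) : Prop :=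
  Vᴴ * V = 1 ∧ ∀ x, ptraceSnd (V * ptraceSnd (W x) * Vᴴ) = ptraceFst (W x)

end Wiretap


section Extras

/-- `id_A ⊗ 𝒟` applied to a bipartite operator, for `𝒟` given by Kraus operators `K i`. -/
def idChan {A B C ι : Type*} [Fintype ι] [Fintype B]
    (K : ι → Matrix C B ℂ) (ρ : Matrix (A × B) (A × B) ℂ) : Matrix (A × C) (A × C) ℂ :=
  Matrix.of fun p q => ∑ i, ∑ b, ∑ b', K i p.2 b * ρ (p.1, b) (q.1, b') * star (K i q.2 b')

/-- Moore–Penrose pseudoinverse of a Hermitian matrix (junk value `0` otherwise). -/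
def pinv {A : Type*} [Fintype A] [DecidableEq A] (M : Matrix A A ℂ) : Matrix A A ℂ :=
  if h : M.IsHermitian then
    (h.eigenvectorUnitary : Matrix A A ℂ) *
      Matrix.diagonal (fun i => ((h.eigenvalues i)⁻¹ : ℂ)) *
      star (h.eigenvectorUnitary : Matrix A A ℂ)
  else 0

/-- Operator norm of a matrix, acting on Euclidean space. -/
def opNorm {A : Type*} [Fintype A] [DecidableEq A] (M : Matrix A A ℂ) : ℝ :=
  ‖Matrix.toEuclideanCLM (𝕜 := ℂ) M‖

/-- The type class `τ(P₀)` of length-`n` words of type `P₀`. -/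
def typeClass {𝓧 : Type*} [Fintype 𝓧] [DecidableEq 𝓧] (n : ℕ) (P0 : 𝓧 → ℝ) :
    Set (Fin n → 𝓧) :=
  {xs | ∀ x, ((Finset.univ.filter fun i => xs i = x).card : ℝ) = n * P0 x}

/-- Holevo capacity of the cq channel `x ↦ Wb x`. -/
def holevoCap {𝓧 B : Type*} [Fintype 𝓧] [Fintype B] [DecidableEq B]
    (Wb : 𝓧 → Matrix B B ℂ) : ℝ :=
  sSup {r : ℝ | ∃ P : 𝓧 → ℝ, (∀ x, 0 ≤ P x) ∧ (∑ x, P x) = 1 ∧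
    r = vN (∑ x, (P x : ℝ) • Wb x) - ∑ x, P x * vN (Wb x)}

end Extras

/-!
Fidelity has the variational form `F(M Mᴴ, N Nᴴ) = max_K Re tr(Mᴴ N K)` over contractions `K`;
both directions follow from polar decompositions and Cauchy–Schwarz for the Hilbert–Schmidt
pairing. Reshaping `√ρ` into an operator from `C ⊗ (A ⊗ B ⊗ C)` to `A ⊗ B`, one reads off that
the partial trace `tr_C` can only increase fidelity, hence `H_max(A|BC)_ρ ≤ H_max(A|B)_{tr_C ρ}`,
and, from the optimal `K` for `F(ρ̄, tr_C ρ)`, that every `ρ̄` on `A ⊗ B` has an extension `ρ'`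
with `tr_C ρ' = ρ̄` and `F(ρ', ρ) ≥ F(ρ̄, tr_C ρ)`. Such a `ρ'` is as close to `ρ` as `ρ̄` is to
`tr_C ρ` and has no larger `H_max`, so the smoothing of the right side is dominated by that of
the left.
-/

open scoped MatrixOrder

lemma conjTranspose_mul_mul_le_conjTranspose_mul_mul {m n : Type*} [Fintype m] [Fintype n]
    {A B : Matrix m m ℂ} (h : A ≤ B) (C : Matrix m n ℂ) : Cᴴ * A * C ≤ Cᴴ * B * C := by
  rw [Matrix.le_iff, ← Matrix.sub_mul, ← Matrix.mul_sub]
  exact h.conjTranspose_mul_mul_same C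

section MatSqrt

variable {n : Type*} [Fintype n] [DecidableEq n]

lemma matSqrt_eq_cfcSqrt {M : Matrix n n ℂ} (h : M.PosSemidef) : matSqrt M = CFC.sqrt M := by
  rw [CFC.sqrt_eq_real_sqrt M h.nonneg, cfcₙ_eq_cfc (hf0 := Real.sqrt_zero), h.1.cfc_eq,
    IsHermitian.cfc, Unitary.conjStarAlgAut_apply, matSqrt, dif_pos h]
  rfl

lemma posSemidef_matSqrt (M : Matrix n n ℂ) : (matSqrt M).PosSemidef := by
  by_cases h : M.PosSemidef
  · rw [matSqrt_eq_cfcSqrt h]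
    exact (CFC.sqrt_nonneg M).posSemidef
  · simpa [matSqrt, h] using PosSemidef.zero

lemma conjTranspose_matSqrt (M : Matrix n n ℂ) : (matSqrt M)ᴴ = matSqrt M :=
  (posSemidef_matSqrt M).1

lemma matSqrt_mul_self {M : Matrix n n ℂ} (h : M.PosSemidef) : matSqrt M * matSqrt M = M := by
  rw [matSqrt_eq_cfcSqrt h]
  exact CFC.sqrt_mul_sqrt_self M h.nonneg

lemma matSqrt_mul_conjTranspose {M : Matrix n n ℂ} (h : M.PosSemidef) :
    matSqrt M * (matSqrt M)ᴴ = M := by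
  rw [conjTranspose_matSqrt, matSqrt_mul_self h]

lemma matSqrt_eq_of_mul_self {M Q : Matrix n n ℂ} (hQ : Q.PosSemidef) (hQQ : Q * Q = M) :
    matSqrt M = Q := by
  have hM : M.PosSemidef := hQQ ▸ pow_two Q ▸ hQ.pow 2
  rw [matSqrt_eq_cfcSqrt hM]
  exact CFC.sqrt_unique hQQ hQ.nonneg

end MatSqrt

section PseudoInverse

variable {n : Type*} [Fintype n] [DecidableEq n] {S : Matrix n n ℂ}

lemma pinv_eq_cfc (h : S.IsHermitian) : pinv S = cfc (·⁻¹ : ℝ → ℝ) S := by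
  rw [h.cfc_eq, IsHermitian.cfc, Unitary.conjStarAlgAut_apply, pinv, dif_pos h]
  simp [Function.comp_def]

lemma mul_pinv_mul_self (h : S.IsHermitian) : S * pinv S * S = S := by
  have hS : IsSelfAdjoint S := h
  have hc : ∀ f : ℝ → ℝ, ContinuousOn f (spectrum ℝ S) := S.finite_real_spectrum.continuousOn
  calc S * pinv S * S = cfc (fun x : ℝ => x * x⁻¹ * x) S := by
        rw [cfc_mul _ _ _ (hc _) (hc _), cfc_mul _ _ _ (hc _) (hc _), cfc_id' ℝ S,
          pinv_eq_cfc h]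
    _ = S := by simp only [mul_inv_mul_cancel, cfc_id' ℝ S]

lemma pinv_mul_self_mul_pinv (h : S.IsHermitian) : pinv S * S * pinv S = pinv S := by
  have hS : IsSelfAdjoint S := h
  have hc : ∀ f : ℝ → ℝ, ContinuousOn f (spectrum ℝ S) := S.finite_real_spectrum.continuousOn
  have hinv : ∀ x : ℝ, x⁻¹ * x * x⁻¹ = x⁻¹ := fun x => by simpa using mul_inv_mul_cancel x⁻¹
  calc pinv S * S * pinv S = cfc (fun x : ℝ => x⁻¹ * x * x⁻¹) S := by
        rw [cfc_mul _ _ _ (hc _) (hc _), cfc_mul _ _ _ (hc _) (hc _), cfc_id' ℝ S,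
          pinv_eq_cfc h]
    _ = pinv S := by simp only [hinv, pinv_eq_cfc h]

lemma mul_pinv_comm (h : S.IsHermitian) : S * pinv S = pinv S * S := by
  have hS : IsSelfAdjoint S := h
  rw [pinv_eq_cfc h]
  exact ((Commute.refl S).cfc_real _).symm

lemma conjTranspose_pinv (S : Matrix n n ℂ) : (pinv S)ᴴ = pinv S := by
  by_cases h : S.IsHermitian
  · rw [pinv_eq_cfc h]
    exact IsSelfAdjoint.cfc
  · simp [pinv, h]

lemma isStarProjection_mul_pinv (h : S.IsHermitian) : IsStarProjection (S * pinv S) where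
  isIdempotentElem := by
    rw [IsIdempotentElem, ← Matrix.mul_assoc, mul_pinv_mul_self h]
  isSelfAdjoint := by
    rw [IsSelfAdjoint, star_eq_conjTranspose, conjTranspose_mul, conjTranspose_pinv, h.eq,
      mul_pinv_comm h]

/-- `Z Zᴴ ≤ S B S` puts the range of `Z` inside that of `S`, onto which `S * pinv S`
projects. -/
lemma mul_pinv_mul_of_mul_conjTranspose_le (h : S.IsHermitian) {m : Type*} [Fintype m]
    {Z : Matrix n m ℂ} {B : Matrix n n ℂ} (hZ : Z * Zᴴ ≤ S * B * S) :
    S * pinv S * Z = Z := by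
  set Q := 1 - S * pinv S
  have hQS : Q * S = 0 := by rw [Matrix.sub_mul, Matrix.one_mul, mul_pinv_mul_self h, sub_self]
  have hQZ : (Q * Z) * (Q * Z)ᴴ = 0 := by
    refine le_antisymm ?_ (posSemidef_self_mul_conjTranspose _).nonneg
    calc (Q * Z) * (Q * Z)ᴴ = Q * (Z * Zᴴ) * star Q := by
          rw [conjTranspose_mul, star_eq_conjTranspose]; simp only [Matrix.mul_assoc]
      _ ≤ Q * (S * B * S) * star Q := star_right_conjugate_le_conjugate hZ Q
      _ = 0 := by
          rw [star_eq_conjTranspose]; simp only [← Matrix.mul_assoc, hQS, Matrix.zero_mul]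
  rw [self_mul_conjTranspose_eq_zero, Matrix.sub_mul, Matrix.one_mul, sub_eq_zero] at hQZ
  exact hQZ.symm

end PseudoInverse

lemma nonempty_of_ne_zero {n : Type*} {M : Matrix n n ℂ} (h0 : M ≠ 0) : Nonempty n := by
  by_contra hn
  rw [not_nonempty_iff] at hn
  exact h0 (Matrix.ext fun i _ => isEmptyElim i)

section Trace

variable {m n : Type*} [Fintype m] [Fintype n]

lemma isState_card_inv_smul_one [DecidableEq n] [Nonempty n] :
    IsState ((Fintype.card n : ℝ)⁻¹ • (1 : Matrix n n ℂ)) :=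
  ⟨PosSemidef.one.smul (by positivity), by simp [trace_one, Fintype.card_ne_zero]⟩

lemma re_trace_nonneg {A : Matrix n n ℂ} (h : A.PosSemidef) : 0 ≤ A.trace.re :=
  (Complex.le_def.mp h.trace_nonneg).1

lemma re_trace_pos {A : Matrix n n ℂ} (h : A.PosSemidef) (h0 : A ≠ 0) : 0 < A.trace.re := by
  refine (re_trace_nonneg h).lt_of_ne fun hre => h0 (h.trace_eq_zero_iff.mp ?_)
  exact Complex.ext hre.symm (Complex.le_def.mp h.trace_nonneg).2.symm

lemma re_trace_le_re_trace {A B : Matrix n n ℂ} (h : A ≤ B) : A.trace.re ≤ B.trace.re := by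
  have := re_trace_nonneg (Matrix.le_iff.mp h)
  rwa [trace_sub, Complex.sub_re, sub_nonneg] at this

lemma re_trace_conjTranspose_mul_self (X : Matrix m n ℂ) :
    (Xᴴ * X).trace.re = ∑ p : m × n, ‖X p.1 p.2‖ ^ 2 := by
  simp only [trace, diag_apply, mul_apply, conjTranspose_apply, Complex.re_sum,
    Fintype.sum_prod_type_right, ← Complex.normSq_eq_norm_sq, Complex.normSq_apply,
    Complex.star_def, Complex.mul_re, Complex.conj_re, Complex.conj_im]
  ring_nf

lemma re_trace_conjTranspose_mul_le (X Y : Matrix m n ℂ) :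
    (Xᴴ * Y).trace.re ≤ √(Xᴴ * X).trace.re * √(Yᴴ * Y).trace.re := by
  let f : EuclideanSpace ℂ (m × n) := WithLp.toLp 2 fun p => X p.1 p.2
  let g : EuclideanSpace ℂ (m × n) := WithLp.toLp 2 fun p => Y p.1 p.2
  have hfg : (Xᴴ * Y).trace = inner ℂ f g := by
    simp only [trace, diag_apply, mul_apply, conjTranspose_apply, PiLp.inner_apply,
      RCLike.inner_apply, Fintype.sum_prod_type_right, f, g, mul_comm, Complex.star_def]
  have hf : ‖f‖ = √(∑ p : m × n, ‖X p.1 p.2‖ ^ 2) := EuclideanSpace.norm_eq f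
  have hg : ‖g‖ = √(∑ p : m × n, ‖Y p.1 p.2‖ ^ 2) := EuclideanSpace.norm_eq g
  rw [hfg, re_trace_conjTranspose_mul_self, re_trace_conjTranspose_mul_self, ← hf, ← hg]
  exact re_inner_le_norm (𝕜 := ℂ) f g

lemma le_re_trace_smul_one [DecidableEq n] {A : Matrix n n ℂ} (h : A.PosSemidef) :
    A ≤ A.trace.re • (1 : Matrix n n ℂ) := by
  have hA : IsSelfAdjoint A := h.1
  rw [← Algebra.algebraMap_eq_smul_one]
  refine le_algebraMap_of_spectrum_le fun x hx => ?_
  rw [h.1.spectrum_real_eq_range_eigenvalues] at hx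
  obtain ⟨i, rfl⟩ := hx
  rw [h.1.trace_eq_sum_eigenvalues, Complex.re_sum]
  simpa using Finset.single_le_sum (fun j _ => h.eigenvalues_nonneg j) (Finset.mem_univ i)

end Trace

section Contraction

variable {l m n : Type*} [Fintype l] [Fintype m] [Fintype n]

def IsContraction [DecidableEq n] (K : Matrix m n ℂ) : Prop := Kᴴ * K ≤ 1

lemma isContraction_one [DecidableEq n] : IsContraction (1 : Matrix n n ℂ) := by
  simp [IsContraction]

lemma IsContraction.mul [DecidableEq m] [DecidableEq n] {K : Matrix l m ℂ} {L : Matrix m n ℂ}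
    (hK : IsContraction K) (hL : IsContraction L) : IsContraction (K * L) :=
  calc (K * L)ᴴ * (K * L) = Lᴴ * (Kᴴ * K) * L := by
        rw [conjTranspose_mul]; simp only [Matrix.mul_assoc]
    _ ≤ Lᴴ * 1 * L := conjTranspose_mul_mul_le_conjTranspose_mul_mul hK L
    _ ≤ 1 := by rwa [Matrix.mul_one]

lemma isContraction_of_isStarProjection [DecidableEq n] {K : Matrix m n ℂ}
    (h : IsStarProjection (Kᴴ * K)) : IsContraction K :=
  h.le_one

lemma matSqrt_mul_mul_conjTranspose_le [DecidableEq m] [DecidableEq n] {ρ : Matrix m m ℂ}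
    (hρ : ρ.PosSemidef) {K : Matrix n m ℂ} (hK : IsContraction K) :
    (matSqrt ρ * Kᴴ) * (matSqrt ρ * Kᴴ)ᴴ ≤ ρ :=
  calc (matSqrt ρ * Kᴴ) * (matSqrt ρ * Kᴴ)ᴴ = (matSqrt ρ)ᴴᴴ * (Kᴴ * K) * (matSqrt ρ)ᴴ := by
        rw [conjTranspose_mul, conjTranspose_conjTranspose, conjTranspose_conjTranspose]
        simp only [Matrix.mul_assoc]
    _ ≤ (matSqrt ρ)ᴴᴴ * 1 * (matSqrt ρ)ᴴ := conjTranspose_mul_mul_le_conjTranspose_mul_mul hK _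
    _ = ρ := by rw [conjTranspose_conjTranspose, Matrix.mul_one, matSqrt_mul_conjTranspose hρ]

/-- Cauchy–Schwarz for the Hilbert–Schmidt pairing of `√P` with `Y √P`. -/
lemma re_trace_mul_le_re_trace [DecidableEq n] {P Y : Matrix n n ℂ} (hP : P.PosSemidef)
    (hY : IsContraction Y) : (P * Y).trace.re ≤ P.trace.re := by
  set G := matSqrt P
  have hGG : Gᴴ * G = P := by rw [conjTranspose_matSqrt, matSqrt_mul_self hP]
  have hYG : ((Y * G)ᴴ * (Y * G)).trace.re ≤ P.trace.re := by
    rw [← hGG]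
    refine re_trace_le_re_trace ?_
    calc (Y * G)ᴴ * (Y * G) = Gᴴ * (Yᴴ * Y) * G := by
          rw [conjTranspose_mul]; simp only [Matrix.mul_assoc]
      _ ≤ Gᴴ * 1 * G := conjTranspose_mul_mul_le_conjTranspose_mul_mul hY G
      _ = Gᴴ * G := by rw [Matrix.mul_one]
  calc (P * Y).trace.re = (Gᴴ * Y * G).trace.re := by
        rw [← hGG, trace_mul_cycle, conjTranspose_matSqrt, trace_mul_cycle]
    _ ≤ √(Gᴴ * G).trace.re * √((Y * G)ᴴ * (Y * G)).trace.re := by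
        rw [Matrix.mul_assoc]; exact re_trace_conjTranspose_mul_le G (Y * G)
    _ ≤ √P.trace.re * √P.trace.re := by
        rw [hGG]; gcongr
    _ = P.trace.re := Real.mul_self_sqrt (re_trace_nonneg hP)

variable [DecidableEq m]

def polarFactor (M : Matrix m n ℂ) : Matrix m n ℂ :=
  pinv (matSqrt (M * Mᴴ)) * M

lemma matSqrt_mul_polarFactor (M : Matrix m n ℂ) : matSqrt (M * Mᴴ) * polarFactor M = M := by
  rw [polarFactor, ← Matrix.mul_assoc]
  refine mul_pinv_mul_of_mul_conjTranspose_le (posSemidef_matSqrt _).1 (B := 1) ?_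
  rw [Matrix.mul_one, matSqrt_mul_self (posSemidef_self_mul_conjTranspose M)]

lemma conjTranspose_eq_conjTranspose_polarFactor_mul (M : Matrix m n ℂ) :
    Mᴴ = (polarFactor M)ᴴ * matSqrt (M * Mᴴ) := by
  conv_lhs => rw [← matSqrt_mul_polarFactor M]
  rw [conjTranspose_mul, conjTranspose_matSqrt]

lemma polarFactor_mul_conjTranspose (M : Matrix m n ℂ) :
    polarFactor M * (polarFactor M)ᴴ = matSqrt (M * Mᴴ) * pinv (matSqrt (M * Mᴴ)) := by
  unfold polarFactor
  set S := matSqrt (M * Mᴴ)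
  have hS : S.IsHermitian := (posSemidef_matSqrt _).1
  calc pinv S * M * (pinv S * M)ᴴ = pinv S * (S * S) * pinv S := by
        rw [conjTranspose_mul, conjTranspose_pinv,
          matSqrt_mul_self (posSemidef_self_mul_conjTranspose M)]
        simp only [Matrix.mul_assoc]
    _ = S * pinv S * S * pinv S := by
        rw [← Matrix.mul_assoc, ← mul_pinv_comm hS]
    _ = S * pinv S := by rw [mul_pinv_mul_self hS]

lemma isContraction_conjTranspose_polarFactor (M : Matrix m n ℂ) :
    IsContraction (polarFactor M)ᴴ := by
  apply isContraction_of_isStarProjection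
  rw [conjTranspose_conjTranspose, polarFactor_mul_conjTranspose]
  exact isStarProjection_mul_pinv (posSemidef_matSqrt _).1

lemma isContraction_polarFactor [DecidableEq n] (M : Matrix m n ℂ) :
    IsContraction (polarFactor M) := by
  have hS : (matSqrt (M * Mᴴ)).IsHermitian := (posSemidef_matSqrt _).1
  have hPW : matSqrt (M * Mᴴ) * pinv (matSqrt (M * Mᴴ)) * polarFactor M = polarFactor M := by
    rw [polarFactor, ← Matrix.mul_assoc, mul_pinv_comm hS, pinv_mul_self_mul_pinv hS]
  refine isContraction_of_isStarProjection ⟨?_, ?_⟩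
  · rw [IsIdempotentElem]
    calc (polarFactor M)ᴴ * polarFactor M * ((polarFactor M)ᴴ * polarFactor M)
        = (polarFactor M)ᴴ * (polarFactor M * (polarFactor M)ᴴ * polarFactor M) := by
          simp only [Matrix.mul_assoc]
      _ = (polarFactor M)ᴴ * polarFactor M := by rw [polarFactor_mul_conjTranspose, hPW]
  · rw [IsSelfAdjoint, star_eq_conjTranspose, conjTranspose_mul, conjTranspose_conjTranspose]

/-- Douglas' factorization lemma. -/
lemma exists_matSqrt_mul_eq_matSqrt_of_le {ρ₁ ρ₂ : Matrix m m ℂ} (h₁ : ρ₁.PosSemidef)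
    (h : ρ₁ ≤ ρ₂) : ∃ X : Matrix m m ℂ, matSqrt ρ₂ * X = matSqrt ρ₁ ∧ IsContraction Xᴴ := by
  have h₂ : ρ₂.PosSemidef := nonneg_iff_posSemidef.mp (h₁.nonneg.trans h)
  set S := matSqrt ρ₂
  have hS : S.IsHermitian := (posSemidef_matSqrt _).1
  refine ⟨pinv S * matSqrt ρ₁, ?_, ?_⟩
  · rw [← Matrix.mul_assoc]
    refine mul_pinv_mul_of_mul_conjTranspose_le hS (B := 1) ?_
    rwa [Matrix.mul_one, matSqrt_mul_self h₂, matSqrt_mul_conjTranspose h₁]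
  · calc (pinv S * matSqrt ρ₁)ᴴᴴ * (pinv S * matSqrt ρ₁)ᴴ = (pinv S)ᴴ * ρ₁ * pinv S := by
          rw [conjTranspose_conjTranspose, conjTranspose_mul, conjTranspose_pinv]
          conv_rhs => rw [← matSqrt_mul_conjTranspose h₁]
          simp only [Matrix.mul_assoc]
      _ ≤ (pinv S)ᴴ * (S * S) * pinv S := by
          rw [matSqrt_mul_self h₂]
          exact conjTranspose_mul_mul_le_conjTranspose_mul_mul h _
      _ = pinv S * S * (S * pinv S) := by
          rw [conjTranspose_pinv]; simp only [Matrix.mul_assoc]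
      _ ≤ 1 := by
          rw [← mul_pinv_comm hS, ← Matrix.mul_assoc, mul_pinv_mul_self hS]
          exact (isStarProjection_mul_pinv hS).le_one

end Contraction

section Variational

variable {X R₁ R₂ : Type*} [Fintype X] [DecidableEq X] [Fintype R₁] [Fintype R₂]

lemma fid_mul_conjTranspose (M : Matrix X R₁ ℂ) (N : Matrix X R₂ ℂ) :
    fid (M * Mᴴ) (N * Nᴴ) =
      (matSqrt ((matSqrt (M * Mᴴ) * N) * (matSqrt (M * Mᴴ) * N)ᴴ)).trace.re := by
  rw [fid, conjTranspose_mul, conjTranspose_matSqrt]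
  simp only [Matrix.mul_assoc]

variable [DecidableEq R₁]

lemma re_trace_le_fid [DecidableEq R₂] (M : Matrix X R₁ ℂ) (N : Matrix X R₂ ℂ)
    {K : Matrix R₂ R₁ ℂ} (hK : IsContraction K) :
    (Mᴴ * N * K).trace.re ≤ fid (M * Mᴴ) (N * Nᴴ) := by
  obtain ⟨C, hC⟩ : ∃ C, matSqrt (M * Mᴴ) * N = C := ⟨_, rfl⟩
  have hSN : matSqrt (M * Mᴴ) * N = matSqrt (C * Cᴴ) * polarFactor C := by
    rw [hC, matSqrt_mul_polarFactor]
  have hY : IsContraction (polarFactor C * K * (polarFactor M)ᴴ) :=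
    ((isContraction_polarFactor C).mul hK).mul (isContraction_conjTranspose_polarFactor M)
  rw [fid_mul_conjTranspose, hC]
  calc (Mᴴ * N * K).trace.re
      = ((polarFactor M)ᴴ * (matSqrt (M * Mᴴ) * N) * K).trace.re := by
        rw [← Matrix.mul_assoc, ← conjTranspose_eq_conjTranspose_polarFactor_mul]
    _ = (matSqrt (C * Cᴴ) * (polarFactor C * K * (polarFactor M)ᴴ)).trace.re := by
        rw [hSN, Matrix.mul_assoc, trace_mul_comm]; simp only [Matrix.mul_assoc]
    _ ≤ (matSqrt (C * Cᴴ)).trace.re := re_trace_mul_le_re_trace (posSemidef_matSqrt _) hY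

lemma exists_isContraction_re_trace_eq_fid (M : Matrix X R₁ ℂ) (N : Matrix X R₂ ℂ) :
    ∃ K : Matrix R₂ R₁ ℂ, IsContraction K ∧
      (Mᴴ * N * K).trace.re = fid (M * Mᴴ) (N * Nᴴ) := by
  obtain ⟨S, hS⟩ : ∃ S, matSqrt (M * Mᴴ) = S := ⟨_, rfl⟩
  obtain ⟨C, hC⟩ : ∃ C, S * N = C := ⟨_, rfl⟩
  set P := matSqrt (C * Cᴴ)
  have hSh : S.IsHermitian := hS ▸ (posSemidef_matSqrt _).1
  have hPh : P.IsHermitian := (posSemidef_matSqrt _).1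
  have hSN : S * N = P * polarFactor C := by rw [hC, matSqrt_mul_polarFactor]
  have hPP : P * (P * pinv P) = P := by
    rw [mul_pinv_comm hPh, ← Matrix.mul_assoc, mul_pinv_mul_self hPh]
  have hSP : S * pinv S * P = P := by
    refine mul_pinv_mul_of_mul_conjTranspose_le hSh (B := N * Nᴴ) (le_of_eq ?_)
    rw [hPh.eq, matSqrt_mul_self (posSemidef_self_mul_conjTranspose C), ← hC, conjTranspose_mul,
      hSh.eq]
    simp only [Matrix.mul_assoc]
  refine ⟨(polarFactor C)ᴴ * polarFactor M,
    (isContraction_conjTranspose_polarFactor C).mul (isContraction_polarFactor M), ?_⟩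
  rw [fid_mul_conjTranspose, hS, hC]
  calc (Mᴴ * N * ((polarFactor C)ᴴ * polarFactor M)).trace.re
      = ((polarFactor M)ᴴ * (S * N) * (polarFactor C)ᴴ * polarFactor M).trace.re := by
        rw [conjTranspose_eq_conjTranspose_polarFactor_mul, hS]; simp only [Matrix.mul_assoc]
    _ = ((polarFactor M)ᴴ * (P * (P * pinv P)) * polarFactor M).trace.re := by
        rw [hSN, ← polarFactor_mul_conjTranspose C]; simp only [Matrix.mul_assoc]
    _ = (polarFactor M * (polarFactor M)ᴴ * P).trace.re := by
        rw [hPP, trace_mul_cycle]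
    _ = P.trace.re := by rw [polarFactor_mul_conjTranspose, hS, hSP]

end Variational

section Fidelity

variable {n : Type*} [Fintype n] [DecidableEq n]

lemma fid_nonneg (ρ σ : Matrix n n ℂ) : 0 ≤ fid ρ σ :=
  re_trace_nonneg (posSemidef_matSqrt _)

lemma fid_self {ρ : Matrix n n ℂ} (hρ : ρ.PosSemidef) : fid ρ ρ = ρ.trace.re := by
  have h : matSqrt ρ * ρ * matSqrt ρ = ρ * ρ := by
    conv_lhs => rw [← matSqrt_mul_self hρ]
    rw [← Matrix.mul_assoc, matSqrt_mul_self hρ, Matrix.mul_assoc, matSqrt_mul_self hρ]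
  rw [fid, h, matSqrt_eq_of_mul_self hρ rfl]

lemma fid_le_sqrt_mul_sqrt {ρ σ : Matrix n n ℂ} (hρ : ρ.PosSemidef) (hσ : σ.PosSemidef) :
    fid ρ σ ≤ √ρ.trace.re * √σ.trace.re := by
  obtain ⟨K, hK, hval⟩ := exists_isContraction_re_trace_eq_fid (matSqrt ρ) (matSqrt σ)
  obtain ⟨M, hM⟩ : ∃ M, matSqrt ρ = M := ⟨_, rfl⟩
  obtain ⟨N, hN⟩ : ∃ N, matSqrt σ = N := ⟨_, rfl⟩
  have hρM : M * Mᴴ = ρ := hM ▸ matSqrt_mul_conjTranspose hρ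
  have hσN : Nᴴ * N = σ := by rw [← hN, conjTranspose_matSqrt, matSqrt_mul_self hσ]
  have hσN' : N * Nᴴ = σ := hN ▸ matSqrt_mul_conjTranspose hσ
  rw [hM, hN, hρM, hσN'] at hval
  have hMK : ((M * Kᴴ)ᴴ * (M * Kᴴ)).trace.re ≤ ρ.trace.re := by
    rw [trace_mul_comm, conjTranspose_mul, conjTranspose_conjTranspose, ← hρM]
    refine re_trace_le_re_trace ?_
    simpa [Matrix.mul_assoc] using conjTranspose_mul_mul_le_conjTranspose_mul_mul hK Mᴴ
  calc fid ρ σ = ((M * Kᴴ)ᴴ * N).trace.re := by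
        rw [← hval, conjTranspose_mul, conjTranspose_conjTranspose, trace_mul_cycle]
    _ ≤ √((M * Kᴴ)ᴴ * (M * Kᴴ)).trace.re * √(Nᴴ * N).trace.re :=
        re_trace_conjTranspose_mul_le _ _
    _ ≤ √ρ.trace.re * √σ.trace.re := by
        rw [hσN]; gcongr

lemma fid_le_fid_of_le {ρ₁ ρ₂ τ : Matrix n n ℂ} (h₁ : ρ₁.PosSemidef) (h : ρ₁ ≤ ρ₂)
    (hτ : τ.PosSemidef) : fid ρ₁ τ ≤ fid ρ₂ τ := by
  have h₂ : ρ₂.PosSemidef := nonneg_iff_posSemidef.mp (h₁.nonneg.trans h)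
  obtain ⟨X, hX, hXc⟩ := exists_matSqrt_mul_eq_matSqrt_of_le h₁ h
  obtain ⟨K, hK, hval⟩ := exists_isContraction_re_trace_eq_fid (matSqrt ρ₁) (matSqrt τ)
  rw [matSqrt_mul_conjTranspose h₁, matSqrt_mul_conjTranspose hτ] at hval
  have hub := re_trace_le_fid (matSqrt ρ₂) (matSqrt τ) (hK.mul hXc)
  rw [matSqrt_mul_conjTranspose h₂, matSqrt_mul_conjTranspose hτ] at hub
  calc fid ρ₁ τ = ((matSqrt ρ₂)ᴴ * matSqrt τ * (K * Xᴴ)).trace.re := by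
        rw [← hval, ← hX, conjTranspose_mul, conjTranspose_matSqrt, Matrix.mul_assoc,
          Matrix.mul_assoc, trace_mul_comm]
        simp only [Matrix.mul_assoc]
    _ ≤ fid ρ₂ τ := hub

/-- The contraction `√ρ / √(tr ρ)` is admissible in the variational formula because
`ρ ≤ tr ρ • 1`. -/
lemma sqrt_mul_sqrt_le_fid_smul_one {ρ : Matrix n n ℂ} (hρ : ρ.PosSemidef) {c : ℝ}
    (hc : 0 ≤ c) : √c * √ρ.trace.re ≤ fid ρ (c • (1 : Matrix n n ℂ)) := by
  obtain ⟨t, ht⟩ : ∃ t, √ρ.trace.re = t := ⟨_, rfl⟩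
  rw [ht]
  rcases (ht ▸ Real.sqrt_nonneg ρ.trace.re).eq_or_lt with ht0 | ht0
  · rw [← ht0, mul_zero]
    exact fid_nonneg _ _
  have htt : t * t = ρ.trace.re := ht ▸ Real.mul_self_sqrt (re_trace_nonneg hρ)
  have hK : IsContraction (t⁻¹ • matSqrt ρ) :=
    calc (t⁻¹ • matSqrt ρ)ᴴ * (t⁻¹ • matSqrt ρ) = (ρ.trace.re)⁻¹ • ρ := by
          rw [conjTranspose_smul, star_trivial, conjTranspose_matSqrt, smul_mul_smul_comm,
            matSqrt_mul_self hρ, ← mul_inv, htt]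
      _ ≤ (ρ.trace.re)⁻¹ • (ρ.trace.re • 1) :=
          smul_le_smul_of_nonneg_left (le_re_trace_smul_one hρ)
            (inv_nonneg.mpr (re_trace_nonneg hρ))
      _ = 1 := by
          rw [smul_smul, inv_mul_cancel₀ (htt ▸ (mul_pos ht0 ht0).ne'), one_smul]
  have hN : (√c • (1 : Matrix n n ℂ)) * (√c • (1 : Matrix n n ℂ))ᴴ = c • (1 : Matrix n n ℂ) := by
    rw [conjTranspose_smul, conjTranspose_one, star_trivial, smul_mul_smul_comm, Matrix.mul_one,
      Real.mul_self_sqrt hc]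
  calc √c * t = (((matSqrt ρ)ᴴ * (√c • 1) * (t⁻¹ • matSqrt ρ)).trace.re) := by
        rw [conjTranspose_matSqrt, Matrix.mul_smul, Matrix.mul_smul, Matrix.smul_mul,
          Matrix.mul_one, matSqrt_mul_self hρ, smul_smul, trace_smul, Complex.real_smul,
          Complex.re_ofReal_mul, ← htt]
        field_simp
    _ ≤ fid ρ (c • (1 : Matrix n n ℂ)) := by
        simpa only [matSqrt_mul_conjTranspose hρ, hN] using
          re_trace_le_fid (matSqrt ρ) (√c • (1 : Matrix n n ℂ)) hK

end Fidelity

section PartialTrace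

variable {X C : Type*} [Fintype C]

def reshapeSnd {R : Type*} (M : Matrix (X × C) R ℂ) : Matrix X (C × R) ℂ :=
  of fun x q => M (x, q.1) q.2

lemma reshapeSnd_mul_conjTranspose {R : Type*} [Fintype R] (M N : Matrix (X × C) R ℂ) :
    reshapeSnd M * (reshapeSnd N)ᴴ = ptraceSnd (M * Nᴴ) := by
  ext x x'
  simp only [reshapeSnd, ptraceSnd, mul_apply, conjTranspose_apply, of_apply,
    Fintype.sum_prod_type]

lemma reshapeSnd_mul_one_kronecker [DecidableEq C] {R R' : Type*} [Fintype R']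
    (N : Matrix (X × C) R' ℂ) (K : Matrix R' R ℂ) :
    reshapeSnd N * ((1 : Matrix C C ℂ) ⊗ₖ K) = reshapeSnd (N * K) := by
  ext x ⟨c, r⟩
  simp [reshapeSnd, mul_apply, kroneckerMap_apply, Fintype.sum_prod_type, one_apply]

lemma ptraceSnd_add (ρ σ : Matrix (X × C) (X × C) ℂ) :
    ptraceSnd (ρ + σ) = ptraceSnd ρ + ptraceSnd σ := by
  ext x x'
  simp [ptraceSnd, Finset.sum_add_distrib]

lemma ptraceSnd_kronecker (D : Matrix X X ℂ) (σ : Matrix C C ℂ) :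
    ptraceSnd (D ⊗ₖ σ) = σ.trace • D := by
  ext x x'
  simp [ptraceSnd, trace, Finset.mul_sum, mul_comm]

variable [Fintype X]

lemma trace_conjTranspose_reshapeSnd_mul {R : Type*} [Fintype R] (M N : Matrix (X × C) R ℂ) :
    ((reshapeSnd M)ᴴ * reshapeSnd N).trace = (Mᴴ * N).trace := by
  simp only [trace, diag_apply, reshapeSnd, mul_apply, conjTranspose_apply, of_apply,
    Fintype.sum_prod_type]
  rw [Finset.sum_comm]
  exact Finset.sum_congr rfl fun _ _ => Finset.sum_comm

lemma trace_ptraceSnd (ρ : Matrix (X × C) (X × C) ℂ) : (ptraceSnd ρ).trace = ρ.trace := by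
  simp only [trace, diag_apply, ptraceSnd, of_apply, Fintype.sum_prod_type]

variable [DecidableEq X]

lemma posSemidef_ptraceSnd {ρ : Matrix (X × C) (X × C) ℂ} (hρ : ρ.PosSemidef) :
    (ptraceSnd ρ).PosSemidef := by
  rw [← matSqrt_mul_conjTranspose hρ, ← reshapeSnd_mul_conjTranspose]
  exact posSemidef_self_mul_conjTranspose _

lemma IsContraction.one_kronecker [DecidableEq C] {R R' : Type*} [Fintype R] [DecidableEq R]
    [Fintype R'] {K : Matrix R' R ℂ} (hK : IsContraction K) :
    IsContraction ((1 : Matrix C C ℂ) ⊗ₖ K) := by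
  have h1 : (1 : Matrix C C ℂ) ⊗ₖ (1 - Kᴴ * K) + (1 : Matrix C C ℂ) ⊗ₖ (Kᴴ * K) = 1 := by
    rw [← kronecker_add, sub_add_cancel, one_kronecker_one]
  rw [IsContraction, conjTranspose_kronecker, conjTranspose_one, ← mul_kronecker_mul,
    Matrix.one_mul, Matrix.le_iff, ← h1, add_sub_cancel_right]
  exact PosSemidef.one.kronecker (Matrix.le_iff.mp hK)

variable [DecidableEq C]

lemma fid_le_fid_ptraceSnd {ρ σ : Matrix (X × C) (X × C) ℂ} (hρ : ρ.PosSemidef)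
    (hσ : σ.PosSemidef) : fid ρ σ ≤ fid (ptraceSnd ρ) (ptraceSnd σ) := by
  obtain ⟨K, hK, hval⟩ := exists_isContraction_re_trace_eq_fid (matSqrt ρ) (matSqrt σ)
  have hub := re_trace_le_fid (reshapeSnd (matSqrt ρ)) (reshapeSnd (matSqrt σ))
    (hK.one_kronecker (C := C))
  rw [reshapeSnd_mul_conjTranspose, reshapeSnd_mul_conjTranspose, matSqrt_mul_conjTranspose hρ,
    matSqrt_mul_conjTranspose hσ, Matrix.mul_assoc, reshapeSnd_mul_one_kronecker,
    trace_conjTranspose_reshapeSnd_mul, ← Matrix.mul_assoc] at hub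
  rw [matSqrt_mul_conjTranspose hρ, matSqrt_mul_conjTranspose hσ] at hval
  exact hval ▸ hub

/-- Dilate `√ρbar` by the optimal contraction for `F(ρbar, tr_C ρ)`, then pad with
`(ρbar - marginal of the dilation) ⊗ 1/|C|`. -/
lemma exists_ptraceSnd_eq_and_fid_le [Nonempty C] {ρbar : Matrix X X ℂ}
    {ρ : Matrix (X × C) (X × C) ℂ} (hρbar : ρbar.PosSemidef) (hρ : ρ.PosSemidef) :
    ∃ ρ' : Matrix (X × C) (X × C) ℂ, ρ'.PosSemidef ∧ ptraceSnd ρ' = ρbar ∧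
      fid ρbar (ptraceSnd ρ) ≤ fid ρ' ρ := by
  obtain ⟨K, hK, hval⟩ :=
    exists_isContraction_re_trace_eq_fid (matSqrt ρbar) (reshapeSnd (matSqrt ρ))
  rw [matSqrt_mul_conjTranspose hρbar, reshapeSnd_mul_conjTranspose,
    matSqrt_mul_conjTranspose hρ] at hval
  set T := matSqrt ρbar * Kᴴ with hT
  obtain ⟨L, hL⟩ : ∃ L : Matrix (X × C) (X × C) ℂ, reshapeSnd L = T :=
    ⟨of fun y r => T y.1 (y.2, r), rfl⟩
  have hLL : ptraceSnd (L * Lᴴ) = T * Tᴴ := by rw [← reshapeSnd_mul_conjTranspose, hL]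
  have hD : (ρbar - T * Tᴴ).PosSemidef :=
    Matrix.le_iff.mp (matSqrt_mul_mul_conjTranspose_le hρbar hK)
  set u : Matrix C C ℂ := (Fintype.card C : ℝ)⁻¹ • 1
  have hu : IsState u := isState_card_inv_smul_one
  refine ⟨L * Lᴴ + (ρbar - T * Tᴴ) ⊗ₖ u,
    (posSemidef_self_mul_conjTranspose L).add (hD.kronecker hu.1), ?_, ?_⟩
  · rw [ptraceSnd_add, hLL, ptraceSnd_kronecker, hu.2, one_smul, add_sub_cancel]
  · calc fid ρbar (ptraceSnd ρ) = (Lᴴ * matSqrt ρ * 1).trace.re := by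
          rw [Matrix.mul_one, ← trace_conjTranspose_reshapeSnd_mul, hL, ← hval, hT,
            conjTranspose_mul, conjTranspose_conjTranspose, trace_mul_cycle]
      _ ≤ fid (L * Lᴴ) ρ := by
          simpa only [matSqrt_mul_conjTranspose hρ] using
            re_trace_le_fid L (matSqrt ρ) isContraction_one
      _ ≤ fid (L * Lᴴ + (ρbar - T * Tᴴ) ⊗ₖ u) ρ :=
          fid_le_fid_of_le (posSemidef_self_mul_conjTranspose L)
            (le_add_of_nonneg_right (hD.kronecker hu.1).nonneg) hρ

end PartialTrace

section Reindex

variable {m n : Type*} [Fintype m] [Fintype n]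

lemma trace_submatrix_equiv (e : m ≃ n) (M : Matrix n n ℂ) :
    (M.submatrix e e).trace = M.trace :=
  e.sum_comp fun i => M i i

variable [DecidableEq m] [DecidableEq n]

lemma matSqrt_submatrix (e : m ≃ n) (M : Matrix n n ℂ) :
    matSqrt (M.submatrix e e) = (matSqrt M).submatrix e e := by
  by_cases h : M.PosSemidef
  · refine matSqrt_eq_of_mul_self ((posSemidef_matSqrt M).submatrix e) ?_
    rw [submatrix_mul_equiv, matSqrt_mul_self h]
  · have h' : ¬ (M.submatrix e e).PosSemidef := by rwa [posSemidef_submatrix_equiv]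
    simp [matSqrt, h, h']

lemma fid_submatrix (e : m ≃ n) (ρ σ : Matrix n n ℂ) :
    fid (ρ.submatrix e e) (σ.submatrix e e) = fid ρ σ := by
  simp only [fid, matSqrt_submatrix, submatrix_mul_equiv, trace_submatrix_equiv]

end Reindex

section TraceOutLast

variable {A B C : Type*} [Fintype C]

def ptraceLast (ρ : Matrix (A × B × C) (A × B × C) ℂ) : Matrix (A × B) (A × B) ℂ :=
  ptraceSnd (ρ.submatrix (Equiv.prodAssoc A B C) (Equiv.prodAssoc A B C))

lemma ptraceLast_one_kronecker [DecidableEq A] (σ : Matrix (B × C) (B × C) ℂ) :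
    ptraceLast ((1 : Matrix A A ℂ) ⊗ₖ σ) = (1 : Matrix A A ℂ) ⊗ₖ ptraceSnd σ := by
  ext p q
  simp [ptraceLast, ptraceSnd, Finset.mul_sum]

variable [Fintype A] [Fintype B]

lemma trace_ptraceLast (ρ : Matrix (A × B × C) (A × B × C) ℂ) :
    (ptraceLast ρ).trace = ρ.trace := by
  rw [ptraceLast, trace_ptraceSnd, trace_submatrix_equiv]

variable [DecidableEq A] [DecidableEq B]

lemma posSemidef_ptraceLast {ρ : Matrix (A × B × C) (A × B × C) ℂ} (hρ : ρ.PosSemidef) :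
    (ptraceLast ρ).PosSemidef :=
  posSemidef_ptraceSnd (hρ.submatrix _)

variable [DecidableEq C]

lemma fid_le_fid_ptraceLast {ρ σ : Matrix (A × B × C) (A × B × C) ℂ} (hρ : ρ.PosSemidef)
    (hσ : σ.PosSemidef) : fid ρ σ ≤ fid (ptraceLast ρ) (ptraceLast σ) := by
  rw [← fid_submatrix (Equiv.prodAssoc A B C)]
  exact fid_le_fid_ptraceSnd (hρ.submatrix _) (hσ.submatrix _)

lemma exists_ptraceLast_eq_and_fid_le [Nonempty C] {ρbar : Matrix (A × B) (A × B) ℂ}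
    {ρ : Matrix (A × B × C) (A × B × C) ℂ} (hρbar : ρbar.PosSemidef) (hρ : ρ.PosSemidef) :
    ∃ ρ' : Matrix (A × B × C) (A × B × C) ℂ, ρ'.PosSemidef ∧ ptraceLast ρ' = ρbar ∧
      fid ρbar (ptraceLast ρ) ≤ fid ρ' ρ := by
  obtain ⟨ρ', hρ', hρ'bar, hfid⟩ :=
    exists_ptraceSnd_eq_and_fid_le hρbar (hρ.submatrix (Equiv.prodAssoc A B C))
  refine ⟨ρ'.submatrix (Equiv.prodAssoc A B C).symm (Equiv.prodAssoc A B C).symm,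
    hρ'.submatrix _, ?_, ?_⟩
  · rwa [ptraceLast, submatrix_submatrix, Equiv.symm_comp_self, submatrix_id_id]
  · rwa [← fid_submatrix (Equiv.prodAssoc A B C), submatrix_submatrix, Equiv.symm_comp_self,
      submatrix_id_id]

end TraceOutLast

lemma two_mul_logb_sqrt {x : ℝ} (hx : 0 ≤ x) : 2 * Real.logb 2 √x = Real.logb 2 x := by
  rw [Real.logb, Real.logb, Real.log_sqrt hx]
  ring

section MaxEntropy

variable {A B : Type*} [Fintype A] [DecidableEq A] [Fintype B] [DecidableEq B]

def supFid (ρ : Matrix (A × B) (A × B) ℂ) : ℝ :=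
  sSup {f : ℝ | ∃ σ : Matrix B B ℂ, IsState σ ∧ f = fid ρ ((1 : Matrix A A ℂ) ⊗ₖ σ)}

lemma Hmax_eq_two_mul_logb_supFid (ρ : Matrix (A × B) (A × B) ℂ) :
    Hmax ρ = 2 * Real.logb 2 (supFid ρ) :=
  rfl

lemma fid_one_kronecker_le {ρ : Matrix (A × B) (A × B) ℂ} (hρ : ρ.PosSemidef)
    {σ : Matrix B B ℂ} (hσ : IsState σ) :
    fid ρ ((1 : Matrix A A ℂ) ⊗ₖ σ) ≤ √ρ.trace.re * √(Fintype.card A) := by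
  simpa [trace_kronecker, hσ.2] using fid_le_sqrt_mul_sqrt hρ (PosSemidef.one.kronecker hσ.1)

lemma fid_le_supFid {ρ : Matrix (A × B) (A × B) ℂ} (hρ : ρ.PosSemidef) {σ : Matrix B B ℂ}
    (hσ : IsState σ) : fid ρ ((1 : Matrix A A ℂ) ⊗ₖ σ) ≤ supFid ρ :=
  le_csSup ⟨_, by rintro _ ⟨σ', hσ', rfl⟩; exact fid_one_kronecker_le hρ hσ'⟩ ⟨σ, hσ, rfl⟩

lemma supFid_nonneg (ρ : Matrix (A × B) (A × B) ℂ) : 0 ≤ supFid ρ :=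
  Real.sSup_nonneg fun _ ⟨_, _, hf⟩ => hf ▸ fid_nonneg _ _

lemma supFid_le {ρ : Matrix (A × B) (A × B) ℂ} (hρ : ρ.PosSemidef) :
    supFid ρ ≤ √ρ.trace.re * √(Fintype.card A) :=
  Real.sSup_le (by rintro _ ⟨σ, hσ, rfl⟩; exact fid_one_kronecker_le hρ hσ) (by positivity)

lemma sqrt_div_card_le_supFid [Nonempty B] {ρ : Matrix (A × B) (A × B) ℂ}
    (hρ : ρ.PosSemidef) : √(ρ.trace.re / Fintype.card B) ≤ supFid ρ := by
  calc √(ρ.trace.re / Fintype.card B) = √(Fintype.card B : ℝ)⁻¹ * √ρ.trace.re := by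
        rw [Real.sqrt_div' _ (Nat.cast_nonneg _), Real.sqrt_inv, div_eq_inv_mul]
    _ ≤ fid ρ ((Fintype.card B : ℝ)⁻¹ • (1 : Matrix (A × B) (A × B) ℂ)) :=
        sqrt_mul_sqrt_le_fid_smul_one hρ (by positivity)
    _ ≤ supFid ρ := by
        simpa [kronecker_smul, one_kronecker_one] using
          fid_le_supFid hρ (isState_card_inv_smul_one (n := B))

lemma supFid_pos {ρ : Matrix (A × B) (A × B) ℂ} (hρ : ρ.PosSemidef) (h0 : ρ ≠ 0) :
    0 < supFid ρ := by
  have := (nonempty_prod.mp (nonempty_of_ne_zero h0)).2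
  exact (Real.sqrt_pos.mpr (div_pos (re_trace_pos hρ h0)
    (Nat.cast_pos.mpr Fintype.card_pos))).trans_le (sqrt_div_card_le_supFid hρ)

lemma Hmax_zero : Hmax (0 : Matrix (A × B) (A × B) ℂ) = 0 := by
  have hsqrt : matSqrt (0 : Matrix (A × B) (A × B) ℂ) = 0 :=
    matSqrt_eq_of_mul_self PosSemidef.zero (zero_mul 0)
  have h : supFid (0 : Matrix (A × B) (A × B) ℂ) = 0 := by
    refine le_antisymm (Real.sSup_le ?_ le_rfl) (supFid_nonneg _)
    rintro _ ⟨σ, -, rfl⟩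
    simp [fid, hsqrt]
  rw [Hmax_eq_two_mul_logb_supFid, h, Real.logb_zero, mul_zero]

lemma logb_trace_div_card_le_Hmax {ρ : Matrix (A × B) (A × B) ℂ} (hρ : ρ.PosSemidef)
    (h0 : ρ ≠ 0) : Real.logb 2 (ρ.trace.re / Fintype.card B) ≤ Hmax ρ := by
  have := (nonempty_prod.mp (nonempty_of_ne_zero h0)).2
  rw [Hmax_eq_two_mul_logb_supFid,
    ← two_mul_logb_sqrt (div_nonneg (re_trace_nonneg hρ) (Nat.cast_nonneg _))]
  exact mul_le_mul_of_nonneg_left (Real.logb_le_logb_of_le one_lt_two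
    (Real.sqrt_pos.mpr (div_pos (re_trace_pos hρ h0) (Nat.cast_pos.mpr Fintype.card_pos)))
    (sqrt_div_card_le_supFid hρ)) zero_le_two

lemma Hmax_le_logb_trace_mul_card {ρ : Matrix (A × B) (A × B) ℂ} (hρ : ρ.PosSemidef)
    (h0 : ρ ≠ 0) : Hmax ρ ≤ Real.logb 2 (ρ.trace.re * Fintype.card A) := by
  rw [Hmax_eq_two_mul_logb_supFid,
    ← two_mul_logb_sqrt (mul_nonneg (re_trace_nonneg hρ) (Nat.cast_nonneg _)),
    Real.sqrt_mul (re_trace_nonneg hρ)]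
  exact mul_le_mul_of_nonneg_left
    (Real.logb_le_logb_of_le one_lt_two (supFid_pos hρ h0) (supFid_le hρ)) zero_le_two

end MaxEntropy

lemma Hmax_le_Hmax_ptraceLast {A B C : Type*} [Fintype A] [DecidableEq A] [Fintype B]
    [DecidableEq B] [Fintype C] [DecidableEq C] {ρ : Matrix (A × B × C) (A × B × C) ℂ}
    (hρ : ρ.PosSemidef) : Hmax ρ ≤ Hmax (ptraceLast ρ) := by
  by_cases h0 : ρ = 0
  · subst h0
    have h : ptraceLast (0 : Matrix (A × B × C) (A × B × C) ℂ) = 0 := by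
      ext; simp [ptraceLast, ptraceSnd]
    rw [h, Hmax_zero, Hmax_zero]
  rw [Hmax_eq_two_mul_logb_supFid, Hmax_eq_two_mul_logb_supFid]
  refine mul_le_mul_of_nonneg_left
    (Real.logb_le_logb_of_le one_lt_two (supFid_pos hρ h0) ?_) zero_le_two
  refine Real.sSup_le ?_ (supFid_nonneg _)
  rintro _ ⟨σ, hσ, rfl⟩
  calc fid ρ ((1 : Matrix A A ℂ) ⊗ₖ σ)
      ≤ fid (ptraceLast ρ) ((1 : Matrix A A ℂ) ⊗ₖ ptraceSnd σ) := by
        rw [← ptraceLast_one_kronecker]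
        exact fid_le_fid_ptraceLast hρ (PosSemidef.one.kronecker hσ.1)
    _ ≤ supFid (ptraceLast ρ) :=
        fid_le_supFid (posSemidef_ptraceLast hρ)
          ⟨posSemidef_ptraceSnd hσ.1, by rw [trace_ptraceSnd, hσ.2]⟩

section Smoothing

variable {m n : Type*} [Fintype m] [DecidableEq m] [Fintype n] [DecidableEq n]

lemma genFid_nonneg (ρ σ : Matrix n n ℂ) : 0 ≤ genFid ρ σ :=
  add_nonneg (fid_nonneg ρ σ) (Real.sqrt_nonneg _)

lemma pDist_nonneg (ρ σ : Matrix n n ℂ) : 0 ≤ pDist ρ σ :=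
  Real.sqrt_nonneg _

lemma pDist_le_one (ρ σ : Matrix n n ℂ) : pDist ρ σ ≤ 1 :=
  Real.sqrt_le_one.mpr (by nlinarith [sq_nonneg (genFid ρ σ)])

lemma pDist_le_pDist_of_genFid_le {ρ₁ σ₁ : Matrix m m ℂ} {ρ₂ σ₂ : Matrix n n ℂ}
    (h : genFid ρ₁ σ₁ ≤ genFid ρ₂ σ₂) : pDist ρ₂ σ₂ ≤ pDist ρ₁ σ₁ :=
  Real.sqrt_le_sqrt (sub_le_sub_left (pow_le_pow_left₀ (genFid_nonneg ρ₁ σ₁) h 2) 1)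

lemma pDist_self {ρ : Matrix n n ℂ} (hρ : IsSubState ρ) : pDist ρ ρ = 0 := by
  rw [pDist, genFid, fid_self hρ.1, Real.sqrt_mul_self (sub_nonneg.mpr hρ.2)]
  simp

lemma one_sub_sq_le_re_trace {ρ τ : Matrix n n ℂ} (hρ : ρ.PosSemidef) (hτ : IsState τ) {ε : ℝ}
    (hε : pDist ρ τ ≤ ε) : 1 - ε ^ 2 ≤ ρ.trace.re := by
  have hfid : genFid ρ τ = fid ρ τ := by simp [genFid, hτ.2]
  have hle : fid ρ τ ≤ √ρ.trace.re := by
    simpa [hτ.2] using fid_le_sqrt_mul_sqrt hρ hτ.1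
  have hε0 : 0 ≤ ε := (pDist_nonneg ρ τ).trans hε
  rw [pDist, hfid, Real.sqrt_le_left hε0] at hε
  nlinarith [fid_nonneg ρ τ, Real.sq_sqrt (re_trace_nonneg hρ)]

end Smoothing

section SmoothMaxEntropy

variable {A B : Type*} [Fintype A] [DecidableEq A] [Fintype B] [DecidableEq B]

lemma bddBelow_smoothHmax {τ : Matrix (A × B) (A × B) ℂ} (hτ : IsState τ) {ε : ℝ}
    (hε : ε < 1) :
    BddBelow {h : ℝ | ∃ ρ : Matrix (A × B) (A × B) ℂ,
      IsSubState ρ ∧ pDist ρ τ ≤ ε ∧ h = Hmax ρ} := by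
  refine ⟨Real.logb 2 ((1 - ε ^ 2) / Fintype.card B), ?_⟩
  rintro _ ⟨ρ, hρ, hpd, rfl⟩
  have hε0 : 0 ≤ ε := (pDist_nonneg ρ τ).trans hpd
  have htr := one_sub_sq_le_re_trace hρ.1 hτ hpd
  have hpos : 0 < 1 - ε ^ 2 := by nlinarith
  have h0 : ρ ≠ 0 := fun h => by rw [h, trace_zero, Complex.zero_re] at htr; linarith
  have := (nonempty_prod.mp (nonempty_of_ne_zero h0)).2
  refine (Real.logb_le_logb_of_le one_lt_two (by positivity) ?_).trans
    (logb_trace_div_card_le_Hmax hρ.1 h0)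
  gcongr

/-- For `ε ≥ 1` every `t • τ` with `0 < t ≤ 1 / tr τ` is admissible, and
`H_max(t • τ) ≤ log₂ (t tr τ |A|) → -∞`, so `sInf` takes its junk value `0`. -/
lemma sHmax_eq_zero_of_one_le {τ : Matrix (A × B) (A × B) ℂ} (hτ : τ.PosSemidef) (h0 : τ ≠ 0)
    {ε : ℝ} (hε : 1 ≤ ε) : sHmax ε τ = 0 := by
  refine Real.sInf_of_not_bddBelow fun ⟨b, hb⟩ => ?_
  have := (nonempty_prod.mp (nonempty_of_ne_zero h0)).1
  have hA : (1 : ℝ) ≤ Fintype.card A := Nat.one_le_cast.mpr Fintype.card_pos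
  have hc : 0 < τ.trace.re * Fintype.card A :=
    mul_pos (re_trace_pos hτ h0) (zero_lt_one.trans_le hA)
  set s := min ((2 : ℝ) ^ (b - 1)) 1
  have hs : 0 < s := lt_min (by positivity) one_pos
  set t := s / (τ.trace.re * Fintype.card A)
  have ht : 0 < t := div_pos hs hc
  have htrt : (t • τ).trace.re = t * τ.trace.re := by simp
  have hst : t * τ.trace.re * Fintype.card A = s := by
    rw [mul_assoc, div_mul_cancel₀ _ hc.ne']
  have hsub : IsSubState (t • τ) := by
    refine ⟨hτ.smul ht.le, ?_⟩
    calc (t • τ).trace.re ≤ t * τ.trace.re * Fintype.card A := by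
          rw [htrt]; exact le_mul_of_one_le_right (mul_pos ht (re_trace_pos hτ h0)).le hA
      _ = s := hst
      _ ≤ 1 := min_le_right _ _
  have hbH := hb ⟨t • τ, hsub, (pDist_le_one _ _).trans hε, rfl⟩
  have hH := Hmax_le_logb_trace_mul_card (hτ.smul ht.le) (smul_ne_zero ht.ne' h0)
  rw [htrt, hst] at hH
  have hlog : Real.logb 2 s ≤ b - 1 := by
    rw [Real.logb_le_iff_le_rpow one_lt_two hs]
    exact min_le_left _ _
  linarith

end SmoothMaxEntropy

lemma exists_isSubState_pDist_le_and_Hmax_le {A B C : Type*} [Fintype A] [DecidableEq A]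
    [Fintype B] [DecidableEq B] [Fintype C] [DecidableEq C] [Nonempty C]
    {ρ : Matrix (A × B × C) (A × B × C) ℂ} (hρ : ρ.PosSemidef)
    {ρbar : Matrix (A × B) (A × B) ℂ} (hbar : IsSubState ρbar) {ε : ℝ}
    (hε : pDist ρbar (ptraceLast ρ) ≤ ε) :
    ∃ ρ' : Matrix (A × B × C) (A × B × C) ℂ,
      IsSubState ρ' ∧ pDist ρ' ρ ≤ ε ∧ Hmax ρ' ≤ Hmax ρbar := by
  obtain ⟨ρ', hρ', hρ'bar, hfid⟩ := exists_ptraceLast_eq_and_fid_le hbar.1 hρ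
  have htr : ρ'.trace = ρbar.trace := by rw [← hρ'bar, trace_ptraceLast]
  refine ⟨ρ', ⟨hρ', htr ▸ hbar.2⟩, (pDist_le_pDist_of_genFid_le ?_).trans hε,
    hρ'bar ▸ Hmax_le_Hmax_ptraceLast hρ'⟩
  rw [genFid, genFid, htr, trace_ptraceLast]
  linarith

/-- Data processing for the smooth max-entropy. -/
theorem data_processing_smooth_max {A B C : Type*}
    [Fintype A] [DecidableEq A] [Fintype B] [DecidableEq B] [Fintype C] [DecidableEq C]
    (ρ : Matrix (A × B × C) (A × B × C) ℂ) (hρ : IsState ρ) (ε : ℝ) (hε : 0 ≤ ε) :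
    sHmax ε ρ ≤
      sHmax ε (Matrix.of fun (p q : A × B) => ∑ c, ρ (p.1, p.2, c) (q.1, q.2, c)) := by
  change sHmax ε ρ ≤ sHmax ε (ptraceLast ρ)
  have h0 : ρ ≠ 0 := fun h => by simp [h, IsState] at hρ
  have := (nonempty_prod.mp (nonempty_prod.mp (nonempty_of_ne_zero h0)).2).2
  have hρC : IsState (ptraceLast ρ) :=
    ⟨posSemidef_ptraceLast hρ.1, by rw [trace_ptraceLast, hρ.2]⟩
  have hsubC : IsSubState (ptraceLast ρ) := ⟨hρC.1, by simp [hρC.2]⟩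
  rcases lt_or_ge ε 1 with hε1 | hε1
  · refine le_csInf ⟨_, _, hsubC, (pDist_self hsubC).trans_le hε, rfl⟩ ?_
    rintro _ ⟨ρbar, hbar, hpd, rfl⟩
    obtain ⟨ρ', hρ', hpd', hH⟩ := exists_isSubState_pDist_le_and_Hmax_le hρ.1 hbar hpd
    exact (csInf_le (bddBelow_smoothHmax hρ hε1) ⟨ρ', hρ', hpd', rfl⟩).trans hH
  · have hC0 : ptraceLast ρ ≠ 0 := fun h => by simp [h, IsState] at hρC
    rw [sHmax_eq_zero_of_one_le hρ.1 h0 hε1, sHmax_eq_zero_of_one_le hρC.1 hC0 hε1]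

end Paper
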